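/- arXiv:0708.2549 — 2 statements merged into one kernel-verified Lean document; each statement's English description precedes it below -/
import Mathlib

section
/- Suppose κ_1 ≤ κ_2 ≤ ... ≤ κ_n are reals with H = ∑_i κ_i > 0 and H_2(κ) > 0, and let i_0 be an index such that κ_{i_0} ≤ 0 or i_0 = 1 (i.e., κ_{i_0} is negative or the smallest component). Then, with F_i = H − κ_i, one has ∑_{i=1}^n F_i κ_i^2 ≥ (1/n) (∑_{i=1}^n F_i) κ_{i_0}^2. -/
/-!
Since `H₂ > 0` gives `κ_i² ≤ ∑ κ_j² < H²` and `H > 0`, every `F_i = H - κ_i` is positive, and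
`F_1` is the largest of them because `κ` is sorted. Hence `∑ F_i ≤ n F_1`, while
`κ_{i₀}² ≤ κ_1²` (either `i₀ = 1`, or `κ_1 ≤ κ_{i₀} ≤ 0`), so the left side is at most
`F_1 κ_1²`, a single term of the nonnegative sum on the right.
-/

open Finset

lemma lt_sum_of_sum_sq_lt_sq_sum {ι : Type*} [Fintype ι] (κ : ι → ℝ) (hH : 0 ≤ ∑ j, κ j)
    (hH2 : ∑ j, κ j ^ 2 < (∑ j, κ j) ^ 2) (i : ι) : κ i < ∑ j, κ j := by
  have hi : κ i ^ 2 ≤ ∑ j, κ j ^ 2 :=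
    single_le_sum (fun j _ => sq_nonneg (κ j)) (mem_univ i)
  exact (abs_lt_of_sq_lt_sq' (hi.trans_lt hH2) hH).2

lemma card_inv_mul_sum_mul_le_sum_mul {ι : Type*} [Fintype ι] (w x : ι → ℝ)
    (hw : ∀ i, 0 ≤ w i) (hx : ∀ i, 0 ≤ x i) (m : ι) (hm : ∀ i, w i ≤ w m) :
    (1 / (Fintype.card ι : ℝ)) * (∑ i, w i) * x m ≤ ∑ i, w i * x i := by
  have hcard : (0 : ℝ) < Fintype.card ι := by
    have : Nonempty ι := ⟨m⟩
    exact_mod_cast Fintype.card_pos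
  have hsum : ∑ i, w i ≤ Fintype.card ι * w m := by
    simpa [nsmul_eq_mul] using sum_le_card_nsmul univ w (w m) (fun i _ => hm i)
  calc (1 / (Fintype.card ι : ℝ)) * (∑ i, w i) * x m
      ≤ (1 / (Fintype.card ι : ℝ)) * (Fintype.card ι * w m) * x m := by gcongr; exact hx m
    _ = w m * x m := by field_simp
    _ ≤ ∑ i, w i * x i :=
      single_le_sum (fun i _ => mul_nonneg (hw i) (hx i)) (mem_univ m)

theorem sum_Fi_kappa_sq_ge (n : ℕ) (hn : 2 ≤ n) (κ : Fin n → ℝ)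
    (hmono : Monotone κ)
    (hH : 0 < ∑ i, κ i)
    (hH2 : 0 < (1 / 2) * ((∑ i, κ i) ^ 2 - ∑ i, (κ i) ^ 2))
    (i₀ : Fin n) (hi₀ : κ i₀ ≤ 0 ∨ i₀ = ⟨0, by omega⟩) :
    (1 / (n : ℝ)) * (∑ i, ((∑ j, κ j) - κ i)) * (κ i₀) ^ 2 ≤
      ∑ i, ((∑ j, κ j) - κ i) * (κ i) ^ 2 := by
  set first : Fin n := ⟨0, by omega⟩
  have hfirst : ∀ i, κ first ≤ κ i := fun i => hmono (Nat.zero_le i.val)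
  have hF : ∀ i, 0 ≤ (∑ j, κ j) - κ i := fun i =>
    sub_nonneg.2 (lt_sum_of_sum_sq_lt_sq_sum κ hH.le (by linarith) i).le
  have hsq : κ i₀ ^ 2 ≤ κ first ^ 2 := by
    rcases hi₀ with hneg | rfl
    · nlinarith [hfirst i₀]
    · rfl
  calc (1 / (n : ℝ)) * (∑ i, ((∑ j, κ j) - κ i)) * κ i₀ ^ 2
      ≤ (1 / (n : ℝ)) * (∑ i, ((∑ j, κ j) - κ i)) * κ first ^ 2 := by
        gcongr
        exact mul_nonneg (by positivity) (sum_nonneg fun i _ => hF i)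
    _ ≤ ∑ i, ((∑ j, κ j) - κ i) * κ i ^ 2 := by
        simpa using card_inv_mul_sum_mul_le_sum_mul (fun i => (∑ j, κ j) - κ i) (κ · ^ 2) hF
          (fun i => sq_nonneg _) first (fun i => by linarith [hfirst i])
end

section
/- The cone Γ_2 = {κ ∈ ℝ^n : H_1(κ) > 0 and H_2(κ) > 0} is a convex subset of ℝ^n. -/
/-- The second elementary symmetric polynomial `H₂(κ) = ∑_{i<j} κ_i κ_j`. -/
def H2 {n : ℕ} (κ : Fin n → ℝ) : ℝ :=
  ∑ p ∈ Finset.univ.filter (fun p : Fin n × Fin n => p.1 < p.2), κ p.1 * κ p.2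

lemma sq_sum_eq {n : ℕ} (κ : Fin n → ℝ) :
    (∑ i, κ i) ^ 2 = (∑ i, κ i ^ 2) + 2 * H2 κ := by
  have h1 : (∑ i, κ i) ^ 2 = ∑ p : Fin n × Fin n, κ p.1 * κ p.2 := by
    rw [sq, Fintype.sum_mul_sum, ← Finset.sum_product']
    rfl
  have h2 := Finset.sum_filter_add_sum_filter_not (Finset.univ : Finset (Fin n × Fin n))
      (fun p => p.1 < p.2) (fun p => κ p.1 * κ p.2)
  have h3 := Finset.sum_filter_add_sum_filter_not
      (Finset.univ.filter (fun p : Fin n × Fin n => ¬ p.1 < p.2))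
      (fun p => p.1 = p.2) (fun p => κ p.1 * κ p.2)
  have hd : ∑ p ∈ (Finset.univ.filter (fun p : Fin n × Fin n => ¬ p.1 < p.2)).filter
      (fun p => p.1 = p.2), κ p.1 * κ p.2 = ∑ i, κ i ^ 2 := by
    rw [Finset.filter_filter]
    refine Finset.sum_nbij' (fun p => p.1) (fun i => (i, i)) ?_ ?_ ?_ ?_ ?_ <;>
      simp +contextual [sq] <;> omega
  have ho : ∑ p ∈ (Finset.univ.filter (fun p : Fin n × Fin n => ¬ p.1 < p.2)).filter
      (fun p => ¬ p.1 = p.2), κ p.1 * κ p.2 = H2 κ := by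
    rw [Finset.filter_filter]
    unfold H2
    refine Finset.sum_nbij' (fun p => (p.2, p.1)) (fun p => (p.2, p.1)) ?_ ?_ ?_ ?_ ?_
    · rintro ⟨x, y⟩ h; simp only [Finset.mem_filter, Finset.mem_univ, true_and] at h ⊢
      omega
    · rintro ⟨x, y⟩ h; simp only [Finset.mem_filter, Finset.mem_univ, true_and] at h ⊢
      constructor <;> omega
    · rintro ⟨x, y⟩ _; rfl
    · rintro ⟨x, y⟩ _; rfl
    · rintro ⟨x, y⟩ _; exact mul_comm _ _
  rw [hd, ho] at h3
  rw [h1, ← h2, ← h3]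
  show H2 κ + _ = _
  ring

theorem Gamma2_convex (n : ℕ) (hn : 2 ≤ n) :
    Convex ℝ {κ : Fin n → ℝ | 0 < ∑ i, κ i ∧ 0 < H2 κ} := by
  rintro κ ⟨hκ1, hκ2⟩ μ ⟨hμ1, hμ2⟩ a b ha hb hab
  rcases eq_or_lt_of_le ha with rfl | ha
  · simpa [show b = 1 by linarith] using And.intro hμ1 hμ2
  rcases eq_or_lt_of_le hb with rfl | hb
  · simpa [show a = 1 by linarith] using And.intro hκ1 hκ2
  have hA : (∑ i, κ i ^ 2) < (∑ i, κ i) ^ 2 := by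
    have := sq_sum_eq κ; nlinarith
  have hB : (∑ i, μ i ^ 2) < (∑ i, μ i) ^ 2 := by
    have := sq_sum_eq μ; nlinarith
  have hCS : (∑ i, κ i * μ i) ^ 2 ≤ (∑ i, κ i ^ 2) * (∑ i, μ i ^ 2) :=
    Finset.sum_mul_sq_le_sq_mul_sq _ _ _
  have hsq : (0:ℝ) ≤ ∑ i, κ i ^ 2 := Finset.sum_nonneg fun i _ => sq_nonneg _
  have hsq' : (0:ℝ) ≤ ∑ i, μ i ^ 2 := Finset.sum_nonneg fun i _ => sq_nonneg _
  have hC : (∑ i, κ i * μ i) < (∑ i, κ i) * (∑ i, μ i) := by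
    nlinarith [abs_nonneg (∑ i, κ i * μ i), sq_abs (∑ i, κ i * μ i),
      le_abs_self (∑ i, κ i * μ i), mul_pos hκ1 hμ1]
  have hsum : ∑ i, (a • κ + b • μ) i = a * ∑ i, κ i + b * ∑ i, μ i := by
    simp [Finset.sum_add_distrib, Finset.mul_sum]
  have hsumsq : ∑ i, ((a • κ + b • μ) i) ^ 2 =
      a ^ 2 * (∑ i, κ i ^ 2) + 2 * (a * b) * (∑ i, κ i * μ i) + b ^ 2 * (∑ i, μ i ^ 2) := by
    simp only [Pi.add_apply, Pi.smul_apply, smul_eq_mul, Finset.mul_sum,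
      ← Finset.sum_add_distrib]
    exact Finset.sum_congr rfl fun i _ => by ring
  constructor
  · rw [hsum]; positivity
  · have h1 : 0 < ∑ i, (a • κ + b • μ) i := by rw [hsum]; positivity
    have := sq_sum_eq (a • κ + b • μ)
    have hlt : (∑ i, ((a • κ + b • μ) i) ^ 2) < (∑ i, (a • κ + b • μ) i) ^ 2 := by
      rw [hsum, hsumsq]
      nlinarith [mul_lt_mul_of_pos_left hA (mul_pos ha ha),
        mul_lt_mul_of_pos_left hB (mul_pos hb hb),
        mul_lt_mul_of_pos_left hC (mul_pos ha hb)]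
    nlinarith
end
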